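/- arXiv:1910.08621 — 6 statements merged into one kernel-verified Lean document; each statement's English description precedes it below -/
import Mathlib

section
/- If a Borel equivalence relation E on a standard Borel space X is the union of a countable family of pairwise disjoint Borel pieces, where E restricted to each piece is Borel reducible to E1 (eventual agreement on sequences of reals), then E itself is Borel reducible to E1. -/
/-- `E1`: eventual agreement of sequences of reals. -/
def E1rel (x y : ℕ → ℝ) : Prop := ∃ n, ∀ m ≥ n, x m = y m

/-- A Borel pairing of `ℕ × ℝ` into `ℝ`: `pr n r` lies in the open interval `(n, n+1)`. -/
noncomputable def prPair (n : ℕ) (r : ℝ) : ℝ := n + 1/2 + Real.arctan r / Real.pi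

lemma prPair_mem (n : ℕ) (r : ℝ) : prPair n r ∈ Set.Ioo (n : ℝ) (n + 1) := by
  have hpi : (0:ℝ) < Real.pi := Real.pi_pos
  have h1 : Real.arctan r / Real.pi < 1/2 := by
    rw [div_lt_iff₀ hpi]
    have := Real.arctan_lt_pi_div_two r
    linarith
  have h2 : -(1/2) < Real.arctan r / Real.pi := by
    rw [lt_div_iff₀ hpi]
    have := Real.neg_pi_div_two_lt_arctan r
    linarith
  constructor <;> (simp only [prPair]; linarith)

lemma prPair_inj {n m : ℕ} {r s : ℝ} (h : prPair n r = prPair m s) : n = m ∧ r = s := by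
  have hn := prPair_mem n r
  have hm := prPair_mem m s
  rw [h] at hn
  have hnm : n = m := by
    by_contra hne
    rcases lt_or_gt_of_ne hne with hlt | hlt
    · have : (n:ℝ) + 1 ≤ m := by exact_mod_cast hlt
      exact absurd (hn.2.trans_le this) (not_lt.2 hm.1.le)
    · have : (m:ℝ) + 1 ≤ n := by exact_mod_cast hlt
      exact absurd (hm.2.trans_le this) (not_lt.2 hn.1.le)
  subst hnm
  refine ⟨rfl, ?_⟩
  have hpi : Real.pi ≠ 0 := Real.pi_ne_zero
  have : Real.arctan r = Real.arctan s := by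
    have h' : Real.arctan r / Real.pi = Real.arctan s / Real.pi := by
      simpa [prPair] using h
    field_simp at h'
    exact h'
  exact Real.arctan_injective this

lemma prPair_continuous (n : ℕ) : Continuous (prPair n) := by
  exact continuous_const.add (Real.continuous_arctan.div_const _)

/-- If a Borel equivalence relation `E` on a standard Borel space is a countable disjoint
union of Borel invariant pieces on each of which it is Borel reducible to `E1`, then `E`
is Borel reducible to `E1`. -/
theorem countable_disjoint_union_hypersmooth
    {X : Type*} [MeasurableSpace X] [StandardBorelSpace X]
    (E : X → X → Prop) (hE : Equivalence E)
    (hEBorel : MeasurableSet {p : X × X | E p.1 p.2})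
    (A : ℕ → Set X) (hAmeas : ∀ n, MeasurableSet (A n))
    (hAdisj : ∀ i j, i ≠ j → Disjoint (A i) (A j))
    (hAcover : ⋃ n, A n = Set.univ)
    (hAinv : ∀ n x y, x ∈ A n → E x y → y ∈ A n)
    (hred : ∀ n, ∃ f : X → (ℕ → ℝ), Measurable f ∧
      ∀ x ∈ A n, ∀ y ∈ A n, (E x y ↔ E1rel (f x) (f y))) :
    ∃ f : X → (ℕ → ℝ), Measurable f ∧ ∀ x y, E x y ↔ E1rel (f x) (f y) := by
  classical
  choose F hFmeas hF using hred
  have hex : ∀ x : X, ∃ n, x ∈ A n := by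
    intro x
    have : x ∈ ⋃ n, A n := hAcover ▸ Set.mem_univ x
    simpa using this
  have huniq : ∀ {n m : ℕ} {x : X}, x ∈ A n → x ∈ A m → n = m := by
    intro n m x hn hm
    by_contra hne
    exact Set.disjoint_left.1 (hAdisj n m hne) hn hm
  set idx : X → ℕ := fun x => (hex x).choose with hidx
  have hidxmem : ∀ x, x ∈ A (idx x) := fun x => (hex x).choose_spec
  have hidxeq : ∀ {n : ℕ} {x : X}, x ∈ A n → idx x = n := fun hn =>
    huniq (hidxmem _) hn
  set h : ℕ → X → ℕ → ℝ := fun n x k => prPair n (F n x k) with hh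
  have hhmeas : ∀ n, Measurable (h n) := by
    intro n
    apply measurable_pi_lambda
    intro k
    exact (prPair_continuous n).measurable.comp ((measurable_pi_apply k).comp (hFmeas n))
  set g : X → ℕ → ℝ := fun x => h (idx x) x with hg
  have hgeq : ∀ {n : ℕ} {x : X}, x ∈ A n → g x = h n x := by
    intro n x hn
    simp [hg, hidxeq hn]
  refine ⟨g, ?_, ?_⟩
  · intro t ht
    have : g ⁻¹' t = ⋃ n, A n ∩ (h n) ⁻¹' t := by
      ext x
      simp only [Set.mem_preimage, Set.mem_iUnion, Set.mem_inter_iff]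
      constructor
      · intro hx
        exact ⟨idx x, hidxmem x, by rwa [← hgeq (hidxmem x)]⟩
      · rintro ⟨n, hn, hxt⟩
        rwa [hgeq hn]
    rw [this]
    exact MeasurableSet.iUnion fun n => (hAmeas n).inter ((hhmeas n) ht)
  · intro x y
    constructor
    · intro hxy
      have hx : x ∈ A (idx x) := hidxmem x
      have hy : y ∈ A (idx x) := hAinv _ _ _ hx hxy
      obtain ⟨N, hN⟩ := ((hF (idx x) x hx y hy).1 hxy)
      refine ⟨N, fun m hm => ?_⟩
      rw [hgeq hx, hgeq hy] at *
      simp only [hh, hN m hm]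
    · rintro ⟨N, hN⟩
      have h0 := hN N le_rfl
      simp only [hg, hh] at h0
      obtain ⟨hidxxy, -⟩ := prPair_inj h0
      have hx : x ∈ A (idx x) := hidxmem x
      have hy : y ∈ A (idx x) := by rw [hidxxy]; exact hidxmem y
      refine (hF (idx x) x hx y hy).2 ⟨N, fun m hm => ?_⟩
      have := hN m hm
      simp only [hg, hh, hidxxy] at this ⊢
      exact (prPair_inj this).2
end

section
/- Let a Polish group G act in a Borel manner on a standard Borel space X, and suppose N is a normal subgroup of G such that the orbit equivalence relation of the restricted N-action admits a Borel selector s : X → X (i.e., s(x) is N-equivalent to x and x E_N y implies s(x) = s(y)). Then, letting Y be the image of s, the map gN ·̂ x = s(g·x) is a well-defined Borel action of the quotient group G/N on Y, and the identity embedding witnesses that the orbit equivalence relation of G on X is Borel reducible to the orbit equivalence relation of G/N on Y. -/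
/-!
Since `N` is normal, translating by `g` carries `N`-orbits onto `N`-orbits, so `s (g • x)`
depends only on the `N`-orbit of `x` and on the coset `gN`. In particular
`s (g • s x) = s (g • x)`, from which the action laws on `range s` and the reduction follow.
-/

section SubgroupSelector

variable {G X : Type*} [Group G] [MulAction G X] {N : Subgroup G} {s : X → X}

theorem Subgroup.exists_mem_smul_smul_eq [N.Normal] (g : G) {x y : X}
    (h : ∃ n ∈ N, n • x = y) : ∃ n ∈ N, n • g • x = g • y := by
  obtain ⟨n, hn, rfl⟩ := h
  refine ⟨g * n * g⁻¹, Subgroup.Normal.conj_mem ‹_› n hn g, ?_⟩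
  simp only [smul_smul, inv_mul_cancel_right]

theorem selector_selector (hsel₁ : ∀ x : X, ∃ n ∈ N, n • x = s x)
    (hsel₂ : ∀ x y : X, (∃ n ∈ N, n • x = y) → s x = s y) (x : X) : s (s x) = s x :=
  (hsel₂ x (s x) (hsel₁ x)).symm

theorem exists_mem_smul_eq_of_selector_eq (hsel₁ : ∀ x : X, ∃ n ∈ N, n • x = s x)
    {x y : X} (h : s x = s y) : ∃ n ∈ N, n • x = y := by
  obtain ⟨n₁, hn₁, h₁⟩ := hsel₁ x
  obtain ⟨n₂, hn₂, h₂⟩ := hsel₁ y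
  refine ⟨n₂⁻¹ * n₁, mul_mem (inv_mem hn₂) hn₁, ?_⟩
  rw [mul_smul, h₁, h, ← h₂, inv_smul_smul]

theorem selector_smul_selector [N.Normal] (hsel₁ : ∀ x : X, ∃ n ∈ N, n • x = s x)
    (hsel₂ : ∀ x y : X, (∃ n ∈ N, n • x = y) → s x = s y) (g : G) (x : X) :
    s (g • s x) = s (g • x) :=
  (hsel₂ _ _ (N.exists_mem_smul_smul_eq g (hsel₁ x))).symm

theorem selector_smul_eq_of_inv_mul_mem [N.Normal]
    (hsel₂ : ∀ x y : X, (∃ n ∈ N, n • x = y) → s x = s y) {g g' : G} (h : g⁻¹ * g' ∈ N)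
    (x : X) : s (g • x) = s (g' • x) := by
  have hg' : g • (g⁻¹ * g') • x = g' • x := by rw [smul_smul, mul_inv_cancel_left]
  exact hsel₂ _ _ (hg' ▸ N.exists_mem_smul_smul_eq g ⟨g⁻¹ * g', h, rfl⟩)

theorem exists_smul_eq_iff_exists_selector_smul_selector_eq [N.Normal]
    (hsel₁ : ∀ x : X, ∃ n ∈ N, n • x = s x)
    (hsel₂ : ∀ x y : X, (∃ n ∈ N, n • x = y) → s x = s y) (x y : X) :
    (∃ g : G, g • x = y) ↔ ∃ g : G, s (g • s x) = s y := by
  simp only [selector_smul_selector hsel₁ hsel₂]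
  constructor
  · rintro ⟨g, rfl⟩
    exact ⟨g, rfl⟩
  · rintro ⟨g, hg⟩
    obtain ⟨n, -, hn⟩ := exists_mem_smul_eq_of_selector_eq hsel₁ hg
    exact ⟨n * g, by rw [mul_smul, hn]⟩

end SubgroupSelector

theorem mod_out_smooth_normal_subgroup_general
    {G : Type*} [Group G]
    [MeasurableSpace G]
    {X : Type*} [MeasurableSpace X]
    [MulAction G X] (hact : Measurable (fun p : G × X => p.1 • p.2))
    (N : Subgroup G) [N.Normal]
    (s : X → X) (hsmeas : Measurable s)
    (hsel₁ : ∀ x : X, ∃ n ∈ N, n • x = s x)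
    (hsel₂ : ∀ x y : X, (∃ n ∈ N, n • x = y) → s x = s y) :
    -- the map `gN ·̂ x = s(g·x)` maps `Y = range s` to itself
    (∀ (g : G) (x : X), x ∈ Set.range s → s (g • x) ∈ Set.range s) ∧
    -- it is well defined on cosets of `N`
    (∀ g g' : G, g⁻¹ * g' ∈ N → ∀ x ∈ Set.range s, s (g • x) = s (g' • x)) ∧
    -- it is an action of the quotient group: identity law
    (∀ x ∈ Set.range s, s ((1 : G) • x) = x) ∧
    -- and compatibility with multiplication
    (∀ g h : G, ∀ x ∈ Set.range s, s (g • s (h • x)) = s ((g * h) • x)) ∧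
    -- it is Borel
    Measurable (fun p : G × X => s (p.1 • p.2)) ∧
    -- and `s` is a Borel reduction of `E_G^X` to the orbit relation of the new action on `Y`
    (∀ x y : X, (∃ g : G, g • x = y) ↔ ∃ g : G, s (g • s x) = s y) := by
  refine ⟨fun g x _ => ⟨g • x, rfl⟩, ?_, ?_, ?_, hsmeas.comp hact,
    exists_smul_eq_iff_exists_selector_smul_selector_eq hsel₁ hsel₂⟩
  · exact fun g g' h x _ => selector_smul_eq_of_inv_mul_mem hsel₂ h x
  · rintro x ⟨y, rfl⟩
    rw [one_smul, selector_selector hsel₁ hsel₂]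
  · intro g h x _
    rw [selector_smul_selector hsel₁ hsel₂, mul_smul]

/-- Modding out a normal subgroup whose orbit equivalence relation has a Borel selector:
the induced map `gN ·̂ x = s(g·x)` is a well-defined Borel action of `G/N` on the image
`Y` of the selector `s`, and `s` (the identity embedding on classes) witnesses that
`E_G^X` is Borel reducible to `E_{G/N}^Y`. -/
theorem mod_out_smooth_normal_subgroup
    {G : Type*} [Group G] [TopologicalSpace G] [IsTopologicalGroup G] [PolishSpace G]
    [MeasurableSpace G] [BorelSpace G]
    {X : Type*} [MeasurableSpace X] [StandardBorelSpace X]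
    [MulAction G X] (hact : Measurable (fun p : G × X => p.1 • p.2))
    (N : Subgroup G) [N.Normal]
    (s : X → X) (hsmeas : Measurable s)
    (hsel₁ : ∀ x : X, ∃ n ∈ N, n • x = s x)
    (hsel₂ : ∀ x y : X, (∃ n ∈ N, n • x = y) → s x = s y) :
    -- the map `gN ·̂ x = s(g·x)` maps `Y = range s` to itself
    (∀ (g : G) (x : X), x ∈ Set.range s → s (g • x) ∈ Set.range s) ∧
    -- it is well defined on cosets of `N`
    (∀ g g' : G, g⁻¹ * g' ∈ N → ∀ x ∈ Set.range s, s (g • x) = s (g' • x)) ∧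
    -- it is an action of the quotient group: identity law
    (∀ x ∈ Set.range s, s ((1 : G) • x) = x) ∧
    -- and compatibility with multiplication
    (∀ g h : G, ∀ x ∈ Set.range s, s (g • s (h • x)) = s ((g * h) • x)) ∧
    -- it is Borel
    Measurable (fun p : G × X => s (p.1 • p.2)) ∧
    -- and `s` is a Borel reduction of `E_G^X` to the orbit relation of the new action on `Y`
    (∀ x y : X, (∃ g : G, g • x = y) ↔ ∃ g : G, s (g • s x) = s y) :=
  mod_out_smooth_normal_subgroup_general hact N s hsmeas hsel₁ hsel₂
end

section
/- If the map f : X → X × 𝕋^{<ω} is defined by f(x) = ⟨x, 0⟩, then f is a reduction of the orbit equivalence relation of the ℝ^{<ω} ⊕ ℤ^{<ω}-action on X to the orbit equivalence relation of the ·̂ action of ℝ^{<ω} ⊕ ℝ^{<ω} on X × 𝕋^{<ω}: that is, ⟨u,v⟩ ·̂ ⟨x, 0⟩ = ⟨y, 0⟩ if and only if v ∈ ℤ^{<ω} and ⟨u,v⟩ · x = y. -/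
/-- The action `·̂` of `ℝ^{<ω} ⊕ ℝ^{<ω}` on `X × 𝕋^{<ω}` built from an action `a` of
`ℝ^{<ω} ⊕ ℤ^{<ω}` on `X`. -/
noncomputable def hatAct {X : Type*} (a : (ℕ →₀ ℝ) → (ℕ →₀ ℤ) → X → X)
    (p : (ℕ →₀ ℝ) × (ℕ →₀ ℝ)) (q : X × (ℕ →₀ ℝ)) : X × (ℕ →₀ ℝ) :=
  ⟨a p.1 (Finsupp.mapRange (fun r : ℝ => ⌊r⌋) Int.floor_zero (p.2 + q.2)) q.1,
    Finsupp.mapRange Int.fract Int.fract_zero (p.2 + q.2)⟩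

/-- The map `f(x) = ⟨x, 0⟩` is a reduction of the orbit equivalence relation of the
`ℝ^{<ω} ⊕ ℤ^{<ω}`-action on `X` to that of the `·̂` action of `ℝ^{<ω} ⊕ ℝ^{<ω}` on
`X × 𝕋^{<ω}`: `⟨u,v⟩ ·̂ ⟨x,0⟩ = ⟨y,0⟩` iff `v ∈ ℤ^{<ω}` and `⟨u,v⟩ · x = y`. -/
theorem hatAct_reduction {X : Type*} (a : (ℕ →₀ ℝ) → (ℕ →₀ ℤ) → X → X)
    (u v : ℕ →₀ ℝ) (x y : X) :
    hatAct a (u, v) (x, 0) = (y, 0) ↔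
      ((∀ n : ℕ, ∃ k : ℤ, v n = (k : ℝ)) ∧
        a u (Finsupp.mapRange (fun r : ℝ => ⌊r⌋) Int.floor_zero v) x = y) := by
  simp only [hatAct, add_zero, Prod.mk.injEq]
  rw [and_comm]
  apply and_congr_left
  intro _
  constructor
  · intro h n
    have := DFunLike.congr_fun h n
    simp only [Finsupp.mapRange_apply, Finsupp.coe_zero, Pi.zero_apply] at this
    exact ⟨⌊v n⌋, by rw [Int.fract] at this; linarith⟩
  · intro h
    ext n
    obtain ⟨k, hk⟩ := h n
    simp [Finsupp.mapRange_apply, hk, Int.fract_intCast]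
end

section
/- Suppose a Hausdorff topological group G acts on a set X, K is a symmetric neighborhood of the identity in G, Y ⊆ X is K-discrete (distinct points x, y ∈ Y satisfy y ∉ K·x), and C ⊆ G is compact. Then for every x ∈ X, the set Y ∩ (C·x) is finite. -/
/-!
Cover the compact set `C` by finitely many neighbourhoods `U` so small that `a * b⁻¹ ∈ K` for all
`a, b ∈ U`. Two points `a • x`, `b • x` of `Y` coming from the same `U` are related by
`(a * b⁻¹) • (b • x) = a • x`, so `K`-discreteness forces them to coincide: each `U` contributes
at most one point of `Y ∩ C • x`.
-/

open Filter Topology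

theorem IsCompact.finite_inter_image_of_forall_nhds_subsingleton {α β : Type*}
    [TopologicalSpace α] {C : Set α} (hC : IsCompact C) (f : α → β) (Y : Set β)
    (h : ∀ g ∈ C, ∃ U ∈ 𝓝 g, (Y ∩ f '' U).Subsingleton) : (Y ∩ f '' C).Finite := by
  choose! U hU hUY using h
  obtain ⟨t, htC, hCt⟩ := hC.elim_nhds_subcover U hU
  refine (t.finite_toSet.biUnion fun g hg => (hUY g (htC g hg)).finite).subset ?_
  rintro _ ⟨hy, a, haC, rfl⟩
  obtain ⟨g, hg, haU⟩ := Set.mem_iUnion₂.mp (hCt haC)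
  exact Set.mem_iUnion₂.mpr ⟨g, hg, hy, a, haU, rfl⟩

theorem exists_mem_nhds_forall_mul_inv_mem {G : Type*} [Group G] [TopologicalSpace G]
    [IsTopologicalGroup G] {K : Set G} (hK : K ∈ 𝓝 1) (g : G) :
    ∃ U ∈ 𝓝 g, ∀ a ∈ U, ∀ b ∈ U, a * b⁻¹ ∈ K := by
  have hcont : Tendsto (fun p : G × G => p.1 * p.2⁻¹) (𝓝 g ×ˢ 𝓝 g) (𝓝 1) := by
    have : Continuous fun p : G × G => p.1 * p.2⁻¹ := by fun_prop
    simpa [nhds_prod_eq] using this.tendsto (g, g)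
  obtain ⟨U, hU, hUK⟩ := Filter.mem_prod_self_iff.mp (hcont hK)
  exact ⟨U, hU, fun a ha b hb => hUK (Set.mk_mem_prod ha hb)⟩

theorem subsingleton_inter_image_smul_of_mul_inv_mem {G X : Type*} [Group G] [MulAction G X]
    {K : Set G} {Y : Set X} (hYdisc : ∀ x ∈ Y, ∀ y ∈ Y, x ≠ y → ∀ k ∈ K, k • x ≠ y)
    {U : Set G} (hU : ∀ a ∈ U, ∀ b ∈ U, a * b⁻¹ ∈ K) (x : X) :
    (Y ∩ (· • x) '' U).Subsingleton := by
  rintro _ ⟨hay, a, ha, rfl⟩ _ ⟨hby, b, hb, rfl⟩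
  by_contra hne
  exact hYdisc _ hby _ hay (Ne.symm hne) _ (hU a ha b hb) (by simp [smul_smul])

theorem K_discrete_inter_compact_orbit_finite_general
    {G X : Type*} [Group G] [TopologicalSpace G] [IsTopologicalGroup G]
    [MulAction G X]
    (K : Set G) (hKnhds : K ∈ nhds (1 : G))
    (Y : Set X) (hYdisc : ∀ x ∈ Y, ∀ y ∈ Y, x ≠ y → ∀ k ∈ K, k • x ≠ y)
    (C : Set G) (hC : IsCompact C) (x : X) :
    (Y ∩ ((· • x) '' C)).Finite := by
  refine hC.finite_inter_image_of_forall_nhds_subsingleton _ Y fun g _ => ?_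
  obtain ⟨U, hU, hUK⟩ := exists_mem_nhds_forall_mul_inv_mem hKnhds g
  exact ⟨U, hU, subsingleton_inter_image_smul_of_mul_inv_mem hYdisc hUK x⟩

/-- In a Hausdorff topological group `G` acting on a set `X`, if `K` is a symmetric
neighborhood of the identity, `Y ⊆ X` is `K`-discrete, and `C ⊆ G` is compact, then
`Y ∩ (C·x)` is finite for every `x ∈ X`. -/
theorem K_discrete_inter_compact_orbit_finite
    {G X : Type*} [Group G] [TopologicalSpace G] [IsTopologicalGroup G] [T2Space G]
    [MulAction G X]
    (K : Set G) (hKnhds : K ∈ nhds (1 : G)) (hKsymm : K⁻¹ = K)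
    (Y : Set X) (hYdisc : ∀ x ∈ Y, ∀ y ∈ Y, x ≠ y → ∀ k ∈ K, k • x ≠ y)
    (C : Set G) (hC : IsCompact C) (x : X) :
    (Y ∩ ((· • x) '' C)).Finite :=
  K_discrete_inter_compact_orbit_finite_general K hKnhds Y hYdisc C hC x
end

section
/- Let G be a topological group acting on X, and let K₁ ⊆ K₂ be symmetric neighborhoods of the identity with K₁² ⊆ K₂. If A ⊆ G is infinite with a cluster point c ∈ G, and the points {a·x : a ∈ A} are pairwise distinct and lie in a K₂-discrete set Y, then a contradiction follows; hence in a Hausdorff group, any subset of a K₂-discrete set contained in C·x for compact C ⊆ G is finite. -/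
open scoped Pointwise
open Filter Topology

/-!
If `A` clusters at `c`, then two distinct `a₁ a₂ ∈ A` close to `c` satisfy `a₂ * a₁⁻¹ ∈ K`,
since `(g, h) ↦ g * h⁻¹` is continuous and sends `(c, c)` to `1`. Then `a₂ * a₁⁻¹` moves
`a₁ • x` to the distinct point `a₂ • x` of `Y`, against `K`-discreteness. An infinite subset of
a `K`-discrete set inside `C • x` lifts injectively to an infinite subset of the compact set `C`,
which has such a cluster point.
-/

theorem exists_ne_mul_inv_mem_of_forall_nhds_inter_nontrivial
    {G : Type*} [Group G] [TopologicalSpace G] [IsTopologicalGroup G]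
    {A : Set G} {c : G} (hc : ∀ U ∈ 𝓝 c, (A ∩ U).Nontrivial) {V : Set G} (hV : V ∈ 𝓝 1) :
    ∃ a₁ ∈ A, ∃ a₂ ∈ A, a₁ ≠ a₂ ∧ a₂ * a₁⁻¹ ∈ V := by
  have hcont : ContinuousAt (fun p : G × G => p.1 * p.2⁻¹) (c, c) := by fun_prop
  have hV' : (fun p : G × G => p.1 * p.2⁻¹) ⁻¹' V ∈ 𝓝 c ×ˢ 𝓝 c := by
    rw [← nhds_prod_eq]
    exact hcont.preimage_mem_nhds (by simpa using hV)
  obtain ⟨U, hU, hUV⟩ := mem_prod_self_iff.mp hV'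
  obtain ⟨a₁, ⟨ha₁A, ha₁U⟩, a₂, ⟨ha₂A, ha₂U⟩, hne⟩ := hc U hU
  exact ⟨a₁, ha₁A, a₂, ha₂A, hne, hUV (Set.mk_mem_prod ha₂U ha₁U)⟩

theorem Set.Infinite.exists_forall_nhds_inter_infinite_of_subset_isCompact
    {G : Type*} [TopologicalSpace G] {A C : Set G} (hA : A.Infinite) (hC : IsCompact C)
    (hAC : A ⊆ C) : ∃ c ∈ C, ∀ U ∈ 𝓝 c, (A ∩ U).Infinite := by
  obtain ⟨c, hcC, hc⟩ := @hC _ hA.cofinite_inf_principal_neBot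
    (inf_le_right.trans (principal_mono.2 hAC))
  refine ⟨c, hcC, fun U hU => ?_⟩
  have hfreq := clusterPt_iff_frequently.mp hc U hU
  rw [frequently_inf_principal, frequently_cofinite_iff_infinite] at hfreq
  exact hfreq

theorem false_of_forall_nhds_inter_nontrivial_of_smul_discrete
    {G X : Type*} [Group G] [TopologicalSpace G] [IsTopologicalGroup G] [MulAction G X]
    {K : Set G} (hK : K ∈ 𝓝 1) {Y : Set X}
    (hY : ∀ y₁ ∈ Y, ∀ y₂ ∈ Y, y₁ ≠ y₂ → ∀ k ∈ K, k • y₁ ≠ y₂)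
    {A : Set G} {c : G} (hc : ∀ U ∈ 𝓝 c, (A ∩ U).Nontrivial) {x : X}
    (hinj : Set.InjOn (· • x) A) (hAY : (· • x) '' A ⊆ Y) : False := by
  obtain ⟨a₁, ha₁, a₂, ha₂, hne, hk⟩ :=
    exists_ne_mul_inv_mem_of_forall_nhds_inter_nontrivial hc hK
  refine hY _ (hAY ⟨a₁, ha₁, rfl⟩) _ (hAY ⟨a₂, ha₂, rfl⟩) (hinj.ne ha₁ ha₂ hne) _ hk ?_
  rw [smul_smul, inv_mul_cancel_right]

theorem cluster_point_contradiction_and_finiteness_general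
    {G X : Type*} [Group G] [TopologicalSpace G] [IsTopologicalGroup G]
    [MulAction G X]
    (K₂ : Set G) (hK₂nhds : K₂ ∈ nhds (1 : G))
    (x : X) (Y : Set X)
    (hYdisc : ∀ y₁ ∈ Y, ∀ y₂ ∈ Y, y₁ ≠ y₂ → ∀ k ∈ K₂, k • y₁ ≠ y₂) :
    ((∀ (A : Set G) (c : G), A.Infinite →
        (∀ U ∈ nhds c, (A ∩ U).Infinite) →
        Set.InjOn (· • x) A → (· • x) '' A ⊆ Y → False)) ∧
    (T2Space G → ∀ C : Set G, IsCompact C →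
      ∀ S : Set X, S ⊆ Y → S ⊆ (· • x) '' C → S.Finite) := by
  have cluster : ∀ (A : Set G) (c : G), (∀ U ∈ 𝓝 c, (A ∩ U).Infinite) →
      Set.InjOn (· • x) A → (· • x) '' A ⊆ Y → False := fun A c hc =>
    false_of_forall_nhds_inter_nontrivial_of_smul_discrete hK₂nhds hYdisc
      fun U hU => (hc U hU).nontrivial
  refine ⟨fun A c _ => cluster A c, fun _ C hC S hSY hSC => ?_⟩
  by_contra hS
  obtain ⟨A, hAC, hbij⟩ := Set.SurjOn.exists_bijOn_subset hSC
  have hA : A.Infinite := Set.Infinite.of_image _ (hbij.image_eq ▸ hS)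
  obtain ⟨c, -, hc⟩ := hA.exists_forall_nhds_inter_infinite_of_subset_isCompact hC hAC
  exact cluster A c hc hbij.injOn (hbij.image_eq ▸ hSY)

/-- Let `G` act on `X`, and let `K₁ ⊆ K₂` be symmetric neighborhoods of the identity
with `K₁² ⊆ K₂`. If `A ⊆ G` is infinite with a cluster point `c`, and `{a·x : a ∈ A}`
are pairwise distinct points of a `K₂`-discrete set `Y`, a contradiction follows; hence,
in a Hausdorff group, any subset of a `K₂`-discrete set contained in `C·x` for compact
`C` is finite. -/
theorem cluster_point_contradiction_and_finiteness
    {G X : Type*} [Group G] [TopologicalSpace G] [IsTopologicalGroup G]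
    [MulAction G X]
    (K₁ K₂ : Set G) (hK₁nhds : K₁ ∈ nhds (1 : G)) (hK₂nhds : K₂ ∈ nhds (1 : G))
    (hK₁symm : K₁⁻¹ = K₁) (hK₂symm : K₂⁻¹ = K₂)
    (hK₁sub : K₁ ⊆ K₂) (hsq : K₁ * K₁ ⊆ K₂)
    (x : X) (Y : Set X)
    (hYdisc : ∀ y₁ ∈ Y, ∀ y₂ ∈ Y, y₁ ≠ y₂ → ∀ k ∈ K₂, k • y₁ ≠ y₂) :
    ((∀ (A : Set G) (c : G), A.Infinite →
        (∀ U ∈ nhds c, (A ∩ U).Infinite) →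
        Set.InjOn (· • x) A → (· • x) '' A ⊆ Y → False)) ∧
    (T2Space G → ∀ C : Set G, IsCompact C →
      ∀ S : Set X, S ⊆ Y → S ⊆ (· • x) '' C → S.Finite) :=
  cluster_point_contradiction_and_finiteness_general K₂ hK₂nhds x Y hYdisc
end

section
/- Let G_x^n be a closed subgroup of ℝⁿ and U_x^n = {g ∈ G_x^n : ∀q ∈ ℚ, qg ∈ G_x^n}. With ρ the sup-metric on ℝⁿ and O ⊆ ℝⁿ open, we have U_x^n ∩ O ≠ ∅ if and only if there exists a basic rational box B_k with closure contained in O such that for every m ∈ ℕ and every finite F ⊆ ℚ there is z ∈ ℚⁿ ∩ B_k with ρ(q·z, G_x^n) < 1/m for all q ∈ F. -/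
/-- The open rational box in `ℝⁿ` with corners `a, b ∈ ℚⁿ`. -/
def ratBox {n : ℕ} (a b : Fin n → ℚ) : Set (Fin n → ℝ) :=
  {v | ∀ i, (a i : ℝ) < v i ∧ v i < (b i : ℝ)}

/-- Effros-style characterization: for a closed subgroup `Gx` of `ℝⁿ` (with the sup
metric) and `U = {g ∈ Gx : ∀ q ∈ ℚ, qg ∈ Gx}`, and `O` open, `U ∩ O ≠ ∅` iff there is a
basic rational box with closure inside `O` such that for all `m` and all finite `F ⊆ ℚ`
there is a rational point `z` of the box with `ρ(q·z, Gx) < 1/m` for all `q ∈ F`. -/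
theorem Uxn_meets_open_iff {n : ℕ} (Gx : AddSubgroup (Fin n → ℝ))
    (hGxclosed : IsClosed (Gx : Set (Fin n → ℝ)))
    (O : Set (Fin n → ℝ)) (hO : IsOpen O) :
    ({g : Fin n → ℝ | g ∈ Gx ∧ ∀ q : ℚ, (q : ℝ) • g ∈ Gx} ∩ O).Nonempty ↔
      ∃ a b : Fin n → ℚ, closure (ratBox a b) ⊆ O ∧
        ∀ m : ℕ, 0 < m → ∀ F : Finset ℚ, ∃ z : Fin n → ℚ,
          (fun i => (z i : ℝ)) ∈ ratBox a b ∧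
          ∀ q ∈ F, Metric.infDist (fun i => (q : ℝ) * (z i : ℝ)) (Gx : Set (Fin n → ℝ))
            < 1 / m := by
  constructor
  · rintro ⟨g, ⟨hgG, hq⟩, hgO⟩
    obtain ⟨ε, hε, hball⟩ := Metric.isOpen_iff.1 hO g hgO
    have ha : ∀ i, ∃ r : ℚ, g i - ε / 2 < (r : ℝ) ∧ (r : ℝ) < g i := fun i =>
      exists_rat_btwn (by linarith)
    have hb : ∀ i, ∃ r : ℚ, g i < (r : ℝ) ∧ (r : ℝ) < g i + ε / 2 := fun i =>
      exists_rat_btwn (by linarith)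
    choose a ha1 ha2 using ha
    choose b hb1 hb2 using hb
    refine ⟨a, b, ?_, ?_⟩
    · have hsub : closure (ratBox a b) ⊆ Metric.closedBall g (ε / 2) := by
        apply closure_minimal _ Metric.isClosed_closedBall
        intro v hv
        rw [Metric.mem_closedBall, dist_pi_le_iff (by positivity)]
        intro i
        have h1 := ha1 i; have h2 := (hv i).1; have h3 := (hv i).2; have h4 := hb2 i
        rw [Real.dist_eq, abs_le]
        constructor <;> linarith
      intro v hv
      apply hball
      have := hsub hv
      rw [Metric.mem_closedBall] at this
      rw [Metric.mem_ball]; linarith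
    · intro m hm F
      set M : ℝ := 1 + F.sum (fun q => |(q : ℝ)|) with hM
      have hMpos : 0 < M := by
        have : 0 ≤ F.sum (fun q => |(q : ℝ)|) :=
          Finset.sum_nonneg fun q _ => abs_nonneg _
        linarith
      have hqM : ∀ q ∈ F, |(q : ℝ)| ≤ M := by
        intro q hqF
        have := Finset.single_le_sum (f := fun q : ℚ => |(q : ℝ)|)
          (fun q _ => abs_nonneg _) hqF
        linarith
      set c : ℝ := 1 / (2 * m * M) with hc
      have hcpos : 0 < c := by positivity
      have hz : ∀ i, ∃ r : ℚ, max ((a i : ℝ)) (g i - c) < (r : ℝ) ∧ (r : ℝ) < g i :=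
        fun i => exists_rat_btwn (max_lt (ha2 i) (by linarith))
      choose z hz1 hz2 using hz
      refine ⟨z, fun i => ⟨lt_of_le_of_lt (le_max_left _ _) (hz1 i),
        lt_trans (hz2 i) (hb1 i)⟩, ?_⟩
      intro q hqF
      have hqg : (fun i => (q : ℝ) * g i) ∈ (Gx : Set (Fin n → ℝ)) := hq q
      have hdist : dist (fun i => (q : ℝ) * (z i : ℝ)) (fun i => (q : ℝ) * g i) ≤ M * c := by
        rw [dist_pi_le_iff (by positivity)]
        intro i
        rw [Real.dist_eq, ← mul_sub, abs_mul]
        have h1 : (g i : ℝ) - c < (z i : ℝ) := lt_of_le_of_lt (le_max_right _ _) (hz1 i)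
        have h2 := hz2 i
        have h3 : |(z i : ℝ) - g i| ≤ c := by rw [abs_le]; constructor <;> linarith
        exact mul_le_mul (hqM q hqF) h3 (abs_nonneg _) (le_of_lt hMpos)
      have hMc : M * c = 1 / (2 * m) := by
        rw [hc]; field_simp
      calc Metric.infDist (fun i => (q : ℝ) * (z i : ℝ)) (Gx : Set (Fin n → ℝ))
          ≤ dist (fun i => (q : ℝ) * (z i : ℝ)) (fun i => (q : ℝ) * g i) :=
            Metric.infDist_le_dist_of_mem hqg
        _ ≤ M * c := hdist
        _ = 1 / (2 * m) := hMc
        _ < 1 / m := by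
            have hm' : (0 : ℝ) < m := by exact_mod_cast hm
            rw [div_lt_div_iff₀ (by linarith) hm']
            linarith
  · rintro ⟨a, b, hcl, hall⟩
    obtain ⟨e, he⟩ := exists_surjective_nat ℚ
    choose z hz1 hz2 using fun m : ℕ =>
      hall (m + 1) m.succ_pos ((Finset.range (m + 1)).image e)
    set v : ℕ → Fin n → ℝ := fun m i => (z m i : ℝ) with hv
    have hboxIcc : ratBox a b ⊆ Set.Icc (fun i => (a i : ℝ)) (fun i => (b i : ℝ)) := by
      intro w hw
      exact ⟨fun i => (hw i).1.le, fun i => (hw i).2.le⟩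
    have hKc : IsCompact (closure (ratBox a b)) :=
      IsCompact.of_isClosed_subset isCompact_Icc isClosed_closure
        (closure_minimal hboxIcc isClosed_Icc)
    obtain ⟨g, hgcl, φ, hφ, htend⟩ := hKc.tendsto_subseq
      (x := v) (fun m => subset_closure (hz1 m))
    have hGne : (Gx : Set (Fin n → ℝ)).Nonempty := ⟨0, Gx.zero_mem⟩
    have hqmem : ∀ q : ℚ, (q : ℝ) • g ∈ Gx := by
      intro q
      obtain ⟨k, rfl⟩ := he q
      have key : Metric.infDist ((e k : ℝ) • g) (Gx : Set (Fin n → ℝ)) = 0 := by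
        have h0 : Filter.Tendsto
            (fun m => Metric.infDist ((e k : ℝ) • (v (φ m))) (Gx : Set (Fin n → ℝ)))
            Filter.atTop (nhds (Metric.infDist ((e k : ℝ) • g) (Gx : Set (Fin n → ℝ)))) :=
          ((Metric.continuous_infDist_pt _).tendsto _).comp (htend.const_smul _)
        have hbnd : ∀ᶠ m in Filter.atTop,
            Metric.infDist ((e k : ℝ) • (v (φ m))) (Gx : Set (Fin n → ℝ))
              ≤ 1 / ((φ m : ℝ) + 1) := by
          filter_upwards [Filter.eventually_ge_atTop k] with m hm
          have hk : e k ∈ (Finset.range (φ m + 1)).image e :=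
            Finset.mem_image.2 ⟨k, Finset.mem_range.2
              (Nat.lt_succ_of_le (hm.trans hφ.le_apply)), rfl⟩
          have h := hz2 (φ m) (e k) hk
          have heq : (fun i => ((e k : ℚ) : ℝ) * ((z (φ m) i : ℝ)))
              = (e k : ℝ) • (v (φ m)) := rfl
          rw [heq] at h
          have : ((φ m + 1 : ℕ) : ℝ) = (φ m : ℝ) + 1 := by push_cast; ring
          rw [this] at h
          exact h.le
        have hlim0 : Filter.Tendsto (fun m => 1 / ((φ m : ℝ) + 1))
            Filter.atTop (nhds 0) :=
          tendsto_one_div_add_atTop_nhds_zero_nat.comp hφ.tendsto_atTop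
        have hle0 : Metric.infDist ((e k : ℝ) • g) (Gx : Set (Fin n → ℝ)) ≤ 0 :=
          le_of_tendsto_of_tendsto h0 hlim0 hbnd
        exact le_antisymm hle0 Metric.infDist_nonneg
      exact (hGxclosed.mem_iff_infDist_zero hGne).2 key
    refine ⟨g, ⟨?_, hqmem⟩, hcl hgcl⟩
    have := hqmem 1
    simpa using this
end
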